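/- Let d ≥ 1, δ ≥ 0 and 1 < p⁻ ≤ p⁺ < ∞. There exists a constant c ≥ 1, depending only on d, p⁻, p⁺ and δ, such that for every exponent p ∈ [p⁻, p⁺] and all matrices A, B ∈ ℝ^{d×d}: c⁻¹ ((φ_p)*)_{|A^sym|}(|A^sym − B^sym|) ≤ |F*_p(A) − F*_p(B)|² ≤ c ((φ_p)*)_{|A^sym|}(|A^sym − B^sym|). -/

import Mathlib

open MeasureTheory

/-- The N-function `φ_p(r) = ∫₀^r (δ+s)^{p-2} s ds`. -/
noncomputable def phi (δ p r : ℝ) : ℝ :=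
  ∫ s in (0:ℝ)..r, (δ + s) ^ (p - 2) * s

/-- The Fenchel conjugate `ψ*(r) = sup_{s ≥ 0} (r·s − ψ(s))`. -/
noncomputable def fconj (ψ : ℝ → ℝ) (r : ℝ) : ℝ :=
  ⨆ s : NNReal, (r * (s : ℝ) - ψ (s : ℝ))

/-- The shifted conjugate `((φ_p)*)_a(r) := ∫₀^r ((φ_p)*)'(a+s) · s/(a+s) ds`. -/
noncomputable def conjShift (δ p a r : ℝ) : ℝ :=
  ∫ s in (0:ℝ)..r, deriv (fconj (phi δ p)) (a + s) * (s / (a + s))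

/-- The symmetric part `A^sym := ½(A + Aᵀ)`. -/
noncomputable def msym {d : ℕ} (A : Matrix (Fin d) (Fin d) ℝ) : Matrix (Fin d) (Fin d) ℝ :=
  (2 : ℝ)⁻¹ • (A + A.transpose)

/-- The Frobenius norm of a matrix. -/
noncomputable def frob {d : ℕ} (A : Matrix (Fin d) (Fin d) ℝ) : ℝ :=
  Real.sqrt (∑ i, ∑ j, (A i j) ^ 2)

/-- `F*_p(A) := (δ^{p−1}+|A^sym|)^{(p'−2)/2} A^sym` with `p' = p/(p−1)`. -/
noncomputable def Fstar {d : ℕ} (δ p : ℝ) (A : Matrix (Fin d) (Fin d) ℝ) :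
    Matrix (Fin d) (Fin d) ℝ :=
  ((δ ^ (p - 1) + frob (msym A)) ^ ((p / (p - 1) - 2) / 2)) • msym A

/-!
Both sides are comparable to `(δ^{p-1} + |A^sym| + |A^sym - B^sym|)^{p'-2} |A^sym - B^sym|²`.

For the shifted conjugate: the derivative of the Legendre transform of `φ_p` is the inverse
of `φ_p'`, and `(φ_p')⁻¹(t) ≂ (δ^{p-1} + t)^{p'-2} t`. Hence the integrand of `((φ_p)*)_a(r)` is
comparable to `(δ^{p-1} + a + s)^{p'-2} s`, which is increasing in `s`, so its integral over
`[0, r]` is comparable to `r` times its value at `r`.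

For `F*_p`: with `κ = δ^{p-1}` and `σ = (p'-2)/2`, `F*_p(A) = (κ + |A^sym|)^σ A^sym`, and for
vectors of any inner product space `|(κ+|x|)^σ x - (κ+|y|)^σ y|² ≂ (κ+|x|+|x-y|)^{2σ} |x-y|²`.
Both sides are affine in `⟪x, y⟫`, so it suffices to treat `⟪x, y⟫ = ±|x||y|`, where the estimate
is a scalar mean value estimate for `t ↦ (κ + t)^σ t`.

All constants depend on `p` only through `|p' - 2| ≤ p⁻/(p⁻ - 1)` and `2^p ≤ 2^{p⁺}`.
-/

open Set Filter Topology

def Comparable (c x y : ℝ) : Prop := x ≤ c * y ∧ y ≤ c * x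

namespace Comparable

variable {c c' c₁ c₂ x y z : ℝ}

theorem symm (h : Comparable c x y) : Comparable c y x := And.symm h

theorem trans (hc₁ : 0 ≤ c₁) (hc₂ : 0 ≤ c₂) (h₁ : Comparable c₁ x y) (h₂ : Comparable c₂ y z) :
    Comparable (c₁ * c₂) x z := by
  constructor
  · calc x ≤ c₁ * y := h₁.1
      _ ≤ c₁ * (c₂ * z) := mul_le_mul_of_nonneg_left h₂.1 hc₁
      _ = c₁ * c₂ * z := by ring
  · calc z ≤ c₂ * y := h₂.2
      _ ≤ c₂ * (c₁ * x) := mul_le_mul_of_nonneg_left h₁.2 hc₂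
      _ = c₁ * c₂ * x := by ring

theorem mono (h : Comparable c x y) (hc : 0 < c) (hcc' : c ≤ c') (hx : 0 ≤ x) :
    Comparable c' x y := by
  have hy : 0 ≤ y := (mul_nonneg_iff_of_pos_left hc).1 (hx.trans h.1)
  exact ⟨h.1.trans (mul_le_mul_of_nonneg_right hcc' hy),
    h.2.trans (mul_le_mul_of_nonneg_right hcc' hx)⟩

theorem mul_right (h : Comparable c x y) {k : ℝ} (hk : 0 ≤ k) : Comparable c (x * k) (y * k) := by
  constructor
  · calc x * k ≤ c * y * k := mul_le_mul_of_nonneg_right h.1 hk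
      _ = c * (y * k) := by ring
  · calc y * k ≤ c * x * k := mul_le_mul_of_nonneg_right h.2 hk
      _ = c * (x * k) := by ring

theorem sq (h : Comparable c x y) (hx : 0 ≤ x) (hy : 0 ≤ y) :
    Comparable (c ^ 2) (x ^ 2) (y ^ 2) := by
  constructor
  · calc x ^ 2 ≤ (c * y) ^ 2 := pow_le_pow_left₀ hx h.1 2
      _ = c ^ 2 * y ^ 2 := mul_pow c y 2
  · calc y ^ 2 ≤ (c * x) ^ 2 := pow_le_pow_left₀ hy h.2 2
      _ = c ^ 2 * x ^ 2 := mul_pow c x 2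

theorem rpow_le {K τ T : ℝ} (h : Comparable K x y) (hK : 1 ≤ K) (hτ : |τ| ≤ T) (hx : 0 ≤ x)
    (hy : 0 ≤ y) : x ^ τ ≤ K ^ T * y ^ τ := by
  have hK0 : 0 < K := one_pos.trans_le hK
  rcases hy.eq_or_lt with rfl | hy0
  · obtain rfl : x = 0 := le_antisymm (by simpa using h.1) hx
    exact le_mul_of_one_le_left (Real.rpow_nonneg le_rfl τ)
      (Real.one_le_rpow hK ((abs_nonneg τ).trans hτ))
  have hx0 : 0 < x := by nlinarith [h.2]
  rcases le_or_gt 0 τ with hτ0 | hτ0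
  · calc x ^ τ ≤ (K * y) ^ τ := Real.rpow_le_rpow hx h.1 hτ0
      _ = K ^ τ * y ^ τ := Real.mul_rpow hK0.le hy
      _ ≤ K ^ T * y ^ τ := by
          gcongr
          exact (le_abs_self τ).trans hτ
  · calc x ^ τ ≤ (y / K) ^ τ :=
          Real.rpow_le_rpow_of_nonpos (by positivity) (by rw [div_le_iff₀ hK0]; linarith [h.2])
            hτ0.le
      _ = K ^ (-τ) * y ^ τ := by rw [Real.div_rpow hy hK0.le, Real.rpow_neg hK0.le]; ring
      _ ≤ K ^ T * y ^ τ := by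
          gcongr
          exact (neg_le_abs τ).trans hτ

theorem rpow {K τ T : ℝ} (h : Comparable K x y) (hK : 1 ≤ K) (hτ : |τ| ≤ T) (hx : 0 ≤ x)
    (hy : 0 ≤ y) : Comparable (K ^ T) (x ^ τ) (y ^ τ) :=
  ⟨h.rpow_le hK hτ hx hy, h.symm.rpow_le hK hτ hy hx⟩

theorem of_affine {α β γ δ l u w : ℝ} (hl : Comparable c (α + β * l) (γ + δ * l))
    (hu : Comparable c (α + β * u) (γ + δ * u)) (hlw : l ≤ w) (hwu : w ≤ u) :
    Comparable c (α + β * w) (γ + δ * w) := by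
  have affine_nonneg : ∀ a b : ℝ, 0 ≤ a + b * l → 0 ≤ a + b * u → 0 ≤ a + b * w := by
    intro a b hal hau
    rcases le_total 0 b with hb | hb <;> nlinarith
  constructor
  · linarith [affine_nonneg (c * γ - α) (c * δ - β) (by linarith [hl.1]) (by linarith [hu.1])]
  · linarith [affine_nonneg (c * α - γ) (c * β - δ) (by linarith [hl.2]) (by linarith [hu.2])]

theorem intervalIntegral {f g : ℝ → ℝ} {a b : ℝ} (hab : a ≤ b)
    (hf : IntervalIntegrable f volume a b) (hg : IntervalIntegrable g volume a b)
    (h : ∀ s ∈ Icc a b, Comparable c (f s) (g s)) :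
    Comparable c (∫ s in a..b, f s) (∫ s in a..b, g s) := by
  constructor
  · rw [← intervalIntegral.integral_const_mul]
    exact intervalIntegral.integral_mono_on hab hf (hg.const_mul c) fun s hs => (h s hs).1
  · rw [← intervalIntegral.integral_const_mul]
    exact intervalIntegral.integral_mono_on hab hg (hf.const_mul c) fun s hs => (h s hs).2

theorem inv_mul_le (h : Comparable c x y) (hc : 0 < c) : c⁻¹ * x ≤ y := by
  rw [inv_mul_le_iff₀ hc]; exact h.1

end Comparable

/-- For `κ = δ` and `σ = p - 2` this is `φ_p'`, extended oddly to `ℝ`. -/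
noncomputable def shiftedPow (κ σ t : ℝ) : ℝ := (κ + |t|) ^ σ * t

section shiftedPow

variable {κ σ : ℝ}

theorem shiftedPow_of_nonneg {t : ℝ} (ht : 0 ≤ t) : shiftedPow κ σ t = (κ + t) ^ σ * t := by
  rw [shiftedPow, abs_of_nonneg ht]

theorem shiftedPow_neg (t : ℝ) : shiftedPow κ σ (-t) = -shiftedPow κ σ t := by
  simp [shiftedPow]

theorem shiftedPow_zero : shiftedPow κ σ 0 = 0 := by simp [shiftedPow]

theorem continuous_shiftedPow (hκ : 0 ≤ κ) (hσ : -1 < σ) : Continuous (shiftedPow κ σ) := by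
  refine continuous_iff_continuousAt.2 fun t => ?_
  rcases (add_nonneg hκ (abs_nonneg t)).eq_or_lt with h | h
  · obtain ⟨rfl, rfl⟩ : κ = 0 ∧ t = 0 :=
      ⟨by linarith [abs_nonneg t], abs_eq_zero.1 (by linarith [abs_nonneg t])⟩
    have hnorm : ∀ s, ‖shiftedPow 0 σ s‖ = |s| ^ (σ + 1) := fun s => by
      rw [shiftedPow, zero_add, norm_mul, Real.norm_eq_abs, Real.norm_eq_abs,
        abs_of_nonneg (Real.rpow_nonneg (abs_nonneg s) σ),
        Real.rpow_add_one' (abs_nonneg s) (by linarith)]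
    have hlim : Tendsto (fun s : ℝ => |s| ^ (σ + 1)) (𝓝 0) (𝓝 0) := by
      simpa [Real.zero_rpow (by linarith : σ + 1 ≠ 0)] using
        ((continuous_abs.rpow_const (p := σ + 1) fun _ => Or.inr (by linarith)).tendsto 0)
    rw [ContinuousAt, shiftedPow_zero]
    exact squeeze_zero_norm (fun s => (hnorm s).le) hlim
  · exact ((continuous_const.add continuous_abs).continuousAt.rpow_const (Or.inl h.ne')).mul
      continuousAt_id

theorem hasDerivAt_shiftedPow (hκ : 0 ≤ κ) {t : ℝ} (ht : 0 < t) :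
    HasDerivAt (shiftedPow κ σ) ((κ + t) ^ σ + σ * (κ + t) ^ (σ - 1) * t) t := by
  have hbase : HasDerivAt (fun s => (κ + s) ^ σ) (σ * (κ + t) ^ (σ - 1)) t := by
    simpa using ((hasDerivAt_id t).const_add κ).rpow_const (p := σ) (Or.inl (by positivity))
  have hprod := hbase.mul (hasDerivAt_id t)
  refine (hprod.congr_of_eventuallyEq ?_).congr_deriv (by simp; ring)
  filter_upwards [lt_mem_nhds ht] with s hs
  exact shiftedPow_of_nonneg hs.le

theorem shiftedPow_deriv_bounds (hκ : 0 ≤ κ) {t : ℝ} (ht : 0 < t) :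
    (1 + min σ 0) * (κ + t) ^ σ ≤ (κ + t) ^ σ + σ * (κ + t) ^ (σ - 1) * t ∧
      (κ + t) ^ σ + σ * (κ + t) ^ (σ - 1) * t ≤ (1 + max σ 0) * (κ + t) ^ σ := by
  have hκt : 0 < κ + t := by linarith
  have hk0 : 0 ≤ (κ + t) ^ (σ - 1) * t := by positivity
  have hk : (κ + t) ^ (σ - 1) * t ≤ (κ + t) ^ σ := by
    calc (κ + t) ^ (σ - 1) * t ≤ (κ + t) ^ (σ - 1) * (κ + t) := by gcongr; linarith
      _ = (κ + t) ^ σ := by rw [← Real.rpow_add_one hκt.ne', sub_add_cancel]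
  rcases le_total 0 σ with hσ | hσ
  · rw [min_eq_right hσ, max_eq_left hσ]
    constructor <;> nlinarith
  · rw [min_eq_left hσ, max_eq_right hσ]
    constructor <;> nlinarith

theorem strictMono_shiftedPow (hκ : 0 ≤ κ) (hσ : -1 < σ) : StrictMono (shiftedPow κ σ) := by
  have hIci : StrictMonoOn (shiftedPow κ σ) (Ici 0) := by
    refine strictMonoOn_of_deriv_pos (convex_Ici 0) (continuous_shiftedPow hκ hσ).continuousOn
      fun t ht => ?_
    rw [interior_Ici] at ht
    rw [(hasDerivAt_shiftedPow hκ ht).deriv]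
    refine lt_of_lt_of_le ?_ (shiftedPow_deriv_bounds hκ ht).1
    have : 0 < 1 + min σ 0 := by rcases min_cases σ 0 with h | h <;> linarith [h.1]
    have : 0 < κ + t := by linarith [mem_Ioi.1 ht]
    positivity
  refine StrictMonoOn.Iic_union_Ici (a := 0) (fun s hs t ht hst => ?_) hIci
  have := hIci (neg_nonneg.2 (mem_Iic.1 ht)) (neg_nonneg.2 (mem_Iic.1 hs)) (neg_lt_neg hst)
  rw [shiftedPow_neg, shiftedPow_neg] at this
  exact neg_lt_neg_iff.1 this

theorem tendsto_shiftedPow_atTop (hκ : 0 ≤ κ) (hσ : -1 < σ) :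
    Tendsto (shiftedPow κ σ) atTop atTop := by
  have hlim : Tendsto (fun t => (κ + t) ^ (σ + 1) / 2) atTop atTop :=
    ((tendsto_rpow_atTop (by linarith)).comp
      (tendsto_atTop_add_const_left _ κ tendsto_id)).atTop_div_const two_pos
  refine tendsto_atTop_mono' _ ?_ hlim
  filter_upwards [eventually_ge_atTop κ, eventually_gt_atTop 0] with t hκt ht
  rw [shiftedPow_of_nonneg ht.le, Real.rpow_add_one (by positivity), div_le_iff₀ two_pos]
  have : 0 ≤ (κ + t) ^ σ := by positivity
  nlinarith

theorem surjective_shiftedPow (hκ : 0 ≤ κ) (hσ : -1 < σ) :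
    Function.Surjective (shiftedPow κ σ) := by
  refine (continuous_shiftedPow hκ hσ).surjective (tendsto_shiftedPow_atTop hκ hσ) ?_
  have := tendsto_neg_atTop_atBot.comp
    ((tendsto_shiftedPow_atTop hκ hσ).comp tendsto_neg_atBot_atTop)
  exact this.congr fun t => by simp [shiftedPow_neg]

noncomputable def shiftedPowOrderIso (hκ : 0 ≤ κ) (hσ : -1 < σ) : ℝ ≃o ℝ :=
  StrictMono.orderIsoOfSurjective _ (strictMono_shiftedPow hκ hσ) (surjective_shiftedPow hκ hσ)

theorem shiftedPowOrderIso_symm_zero (hκ : 0 ≤ κ) (hσ : -1 < σ) :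
    (shiftedPowOrderIso hκ hσ).symm 0 = 0 :=
  (OrderIso.symm_apply_eq _).2 shiftedPow_zero.symm

theorem shiftedPowOrderIso_symm_nonneg (hκ : 0 ≤ κ) (hσ : -1 < σ) {t : ℝ} (ht : 0 ≤ t) :
    0 ≤ (shiftedPowOrderIso hκ hσ).symm t := by
  simpa [shiftedPowOrderIso_symm_zero] using (shiftedPowOrderIso hκ hσ).symm.monotone ht

end shiftedPow

section Estimates

variable {κ σ : ℝ}

theorem one_le_max_inv {u : ℝ} (hu : 0 < u) : 1 ≤ max u u⁻¹ := by
  rcases le_total 1 u with h | h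
  · exact le_max_of_le_left h
  · exact le_max_of_le_right (one_le_inv₀ hu |>.2 h)

theorem shiftedPow_sub_le (hκ : 0 ≤ κ) (hσ : 0 ≤ σ) {a b : ℝ} (hb : 0 ≤ b) (hba : b ≤ a) :
    shiftedPow κ σ a - shiftedPow κ σ b ≤ (1 + σ) * (κ + a) ^ σ * (a - b) := by
  have hpos : ∀ t ∈ interior (Icc b a), 0 < t := fun t ht => by
    rw [interior_Icc] at ht; exact hb.trans_lt ht.1
  have hderiv := fun t ht => hasDerivAt_shiftedPow (σ := σ) hκ (hpos t ht)
  refine (convex_Icc b a).image_sub_le_mul_sub_of_deriv_le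
    (continuous_shiftedPow hκ (by linarith)).continuousOn
    (fun t ht => (hderiv t ht).differentiableAt.differentiableWithinAt) (fun t ht => ?_)
    b ⟨le_rfl, hba⟩ a ⟨hba, le_rfl⟩ hba
  rw [(hderiv t ht).deriv]
  refine (shiftedPow_deriv_bounds hκ (hpos t ht)).2.trans ?_
  rw [max_eq_left hσ]
  have ht' := hpos t ht
  rw [interior_Icc] at ht
  gcongr
  exact ht.2.le

theorem le_shiftedPow_sub (hκ : 0 ≤ κ) (hσ : -1 < σ) (hσ₀ : σ ≤ 0) {a b : ℝ} (hb : 0 ≤ b)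
    (hba : b ≤ a) :
    (1 + σ) * (κ + a) ^ σ * (a - b) ≤ shiftedPow κ σ a - shiftedPow κ σ b := by
  have hpos : ∀ t ∈ interior (Icc b a), 0 < t := fun t ht => by
    rw [interior_Icc] at ht; exact hb.trans_lt ht.1
  have hderiv := fun t ht => hasDerivAt_shiftedPow (σ := σ) hκ (hpos t ht)
  refine (convex_Icc b a).mul_sub_le_image_sub_of_le_deriv
    (continuous_shiftedPow hκ hσ).continuousOn
    (fun t ht => (hderiv t ht).differentiableAt.differentiableWithinAt) (fun t ht => ?_)
    b ⟨le_rfl, hba⟩ a ⟨hba, le_rfl⟩ hba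
  rw [(hderiv t ht).deriv]
  refine le_trans ?_ (shiftedPow_deriv_bounds hκ (hpos t ht)).1
  rw [min_eq_left hσ₀]
  have ht' := hpos t ht
  rw [interior_Icc] at ht
  exact mul_le_mul_of_nonneg_left
    (Real.rpow_le_rpow_of_nonpos (by linarith) (by linarith [ht.2]) hσ₀) (by linarith)

/-- One bound is the mean value theorem, the other comes from the splitting
`h a - h b = (κ + a) ^ σ (a - b) + ((κ + a) ^ σ - (κ + b) ^ σ) b`. -/
theorem comparable_shiftedPow_sub (hκ : 0 ≤ κ) (hσ : -1 < σ) {a b : ℝ} (hb : 0 ≤ b)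
    (hba : b ≤ a) :
    Comparable (max (1 + σ) (1 + σ)⁻¹) ((κ + a) ^ σ * (a - b))
      (shiftedPow κ σ a - shiftedPow κ σ b) := by
  have hc := one_le_max_inv (show 0 < 1 + σ by linarith)
  have hsplit : shiftedPow κ σ a - shiftedPow κ σ b =
      (κ + a) ^ σ * (a - b) + ((κ + a) ^ σ - (κ + b) ^ σ) * b := by
    rw [shiftedPow_of_nonneg (hb.trans hba), shiftedPow_of_nonneg hb]; ring
  have hx : 0 ≤ (κ + a) ^ σ * (a - b) :=
    mul_nonneg (Real.rpow_nonneg (by linarith) σ) (by linarith)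
  rcases le_total 0 σ with hσ₀ | hσ₀
  · have hlow : (κ + a) ^ σ * (a - b) ≤ shiftedPow κ σ a - shiftedPow κ σ b := by
      have : (κ + b) ^ σ ≤ (κ + a) ^ σ := Real.rpow_le_rpow (by linarith) (by linarith) hσ₀
      nlinarith
    have hup := shiftedPow_sub_le hκ hσ₀ hb hba
    constructor
    · exact hlow.trans (le_mul_of_one_le_left (hx.trans hlow) hc)
    · calc shiftedPow κ σ a - shiftedPow κ σ b ≤ (1 + σ) * ((κ + a) ^ σ * (a - b)) := by
            linarith
        _ ≤ _ := mul_le_mul_of_nonneg_right (le_max_left _ _) hx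
  · have hup : shiftedPow κ σ a - shiftedPow κ σ b ≤ (κ + a) ^ σ * (a - b) := by
      have : ((κ + a) ^ σ - (κ + b) ^ σ) * b ≤ 0 := by
        rcases hb.eq_or_lt with rfl | hb0
        · simp
        exact mul_nonpos_of_nonpos_of_nonneg
          (sub_nonpos.2 (Real.rpow_le_rpow_of_nonpos (by linarith) (by linarith) hσ₀)) hb
      linarith
    have hlow := le_shiftedPow_sub hκ hσ hσ₀ hb hba
    have hy : 0 ≤ shiftedPow κ σ a - shiftedPow κ σ b :=
      le_trans (by rw [mul_assoc]; exact mul_nonneg (by linarith) hx) hlow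
    constructor
    · calc (κ + a) ^ σ * (a - b) ≤ (1 + σ)⁻¹ * (shiftedPow κ σ a - shiftedPow κ σ b) := by
            rw [le_inv_mul_iff₀ (by linarith)]; linarith
        _ ≤ _ := mul_le_mul_of_nonneg_right (le_max_right _ _) hy
    · exact hup.trans (le_mul_of_one_le_left hx hc)

variable {E : Type*} [NormedAddCommGroup E] [InnerProductSpace ℝ E]

theorem comparable_norm_rpow_smul_sub_of_norm_le (hκ : 0 ≤ κ) (hσ : -1 < σ) {x y : E}
    (hyx : ‖y‖ ≤ ‖x‖) :
    Comparable (4 * max (1 + σ) (1 + σ)⁻¹ ^ 2) ((κ + ‖x‖) ^ (2 * σ) * ‖x - y‖ ^ 2)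
      (‖(κ + ‖x‖) ^ σ • x - (κ + ‖y‖) ^ σ • y‖ ^ 2) := by
  set c := max (1 + σ) (1 + σ)⁻¹
  have hc : 1 ≤ c := one_le_max_inv (by linarith)
  set a := ‖x‖
  set b := ‖y‖
  have ha : 0 ≤ a := norm_nonneg x
  have hb : 0 ≤ b := norm_nonneg y
  set ρa := (κ + a) ^ σ
  set ρb := (κ + b) ^ σ
  have hρa : 0 ≤ ρa := Real.rpow_nonneg (by linarith) σ
  have hρb : 0 ≤ ρb := Real.rpow_nonneg (by linarith) σ
  have hw : |inner ℝ x y| ≤ a * b := abs_real_inner_le_norm x y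
  have hN : ‖ρa • x - ρb • y‖ ^ 2 =
      (ρa ^ 2 * a ^ 2 + ρb ^ 2 * b ^ 2) + (-2 * (ρa * ρb)) * inner ℝ x y := by
    rw [norm_sub_sq_real, norm_smul, norm_smul, real_inner_smul_left, real_inner_smul_right,
      Real.norm_of_nonneg hρa, Real.norm_of_nonneg hρb]
    ring
  have hD : (κ + a) ^ (2 * σ) * ‖x - y‖ ^ 2 =
      ρa ^ 2 * (a ^ 2 + b ^ 2) + (-2 * ρa ^ 2) * inner ℝ x y := by
    rw [mul_comm 2 σ, Real.rpow_mul (by linarith), Real.rpow_two, norm_sub_sq_real]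
    ring
  have hmono : ρb * b ≤ ρa * a := by
    simpa only [shiftedPow_of_nonneg, ha, hb] using (strictMono_shiftedPow hκ hσ).monotone hyx
  have hdiff : Comparable (4 * c ^ 2) ((ρa * (a - b)) ^ 2) ((ρa * a - ρb * b) ^ 2) := by
    have h := comparable_shiftedPow_sub hκ hσ hb hyx
    rw [shiftedPow_of_nonneg ha, shiftedPow_of_nonneg hb] at h
    exact (h.sq (mul_nonneg hρa (by linarith)) (by linarith)).mono (by positivity)
      (by nlinarith) (by positivity)
  have hsum : Comparable (4 * c ^ 2) ((ρa * (a + b)) ^ 2) ((ρa * a + ρb * b) ^ 2) := by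
    have h : Comparable 2 (ρa * (a + b)) (ρa * a + ρb * b) := by
      constructor <;> nlinarith [mul_nonneg hρb hb, mul_le_mul_of_nonneg_left hyx hρa]
    exact (h.sq (by positivity) (by positivity)).mono (by norm_num) (by nlinarith) (by positivity)
  rw [hN, hD]
  refine Comparable.of_affine ?_ ?_ (neg_le_of_abs_le hw) (le_of_abs_le hw)
  · convert hsum using 1 <;> ring
  · convert hdiff using 1 <;> ring

theorem comparable_norm_rpow_smul_sub (hκ : 0 ≤ κ) (hσ : -1 < σ) (x y : E) :
    Comparable (3 ^ |2 * σ| * (4 * max (1 + σ) (1 + σ)⁻¹ ^ 2))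
      ((κ + ‖x‖ + ‖x - y‖) ^ (2 * σ) * ‖x - y‖ ^ 2)
      (‖(κ + ‖x‖) ^ σ • x - (κ + ‖y‖) ^ σ • y‖ ^ 2) := by
  have hmax : Comparable (4 * max (1 + σ) (1 + σ)⁻¹ ^ 2)
      ((κ + max ‖x‖ ‖y‖) ^ (2 * σ) * ‖x - y‖ ^ 2)
      (‖(κ + ‖x‖) ^ σ • x - (κ + ‖y‖) ^ σ • y‖ ^ 2) := by
    rcases le_total ‖y‖ ‖x‖ with h | h
    · rw [max_eq_left h]
      exact comparable_norm_rpow_smul_sub_of_norm_le hκ hσ h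
    · rw [max_eq_right h, norm_sub_rev x y, norm_sub_rev ((κ + ‖x‖) ^ σ • x)]
      exact comparable_norm_rpow_smul_sub_of_norm_le hκ hσ h
  have hbase : Comparable 3 (κ + ‖x‖ + ‖x - y‖) (κ + max ‖x‖ ‖y‖) := by
    have h1 := norm_sub_le x y
    have h2 : ‖y‖ ≤ ‖x‖ + ‖x - y‖ := by simpa using norm_sub_le x (x - y)
    have := le_max_left ‖x‖ ‖y‖
    have := le_max_right ‖x‖ ‖y‖
    have := norm_nonneg (x - y)
    constructor
    · linarith
    · rcases max_cases ‖x‖ ‖y‖ with ⟨h, -⟩ | ⟨h, -⟩ <;> linarith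
  have hM : 0 ≤ κ + max ‖x‖ ‖y‖ := add_nonneg hκ ((norm_nonneg x).trans (le_max_left _ _))
  exact ((hbase.rpow (by norm_num) le_rfl (by positivity) hM).mul_right (sq_nonneg _)).trans
    (by positivity) (by positivity) hmax

theorem intervalIntegrable_add_rpow_mul {K e : ℝ} (hK : 0 ≤ K) (he : -1 < e) {a b : ℝ}
    (ha : 0 ≤ a) (hb : 0 ≤ b) :
    IntervalIntegrable (fun s => (K + s) ^ e * s) volume a b := by
  refine ContinuousOn.intervalIntegrable ((continuous_shiftedPow hK he).continuousOn.congr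
    fun s hs => (shiftedPow_of_nonneg ?_).symm)
  exact (le_min ha hb).trans hs.1

/-- `s ↦ (K + s) ^ e s` is increasing, so its integral over `[0, r]` is at most `r` times its
value at `r` and at least `r / 2` times its value at `r / 2`. -/
theorem comparable_integral_add_rpow_mul {K e r : ℝ} (hK : 0 ≤ K) (he : -1 < e) (hr : 0 ≤ r) :
    Comparable (4 * 2 ^ |e|) ((K + r) ^ e * r ^ 2) (∫ s in (0 : ℝ)..r, (K + s) ^ e * s) := by
  have hmono : MonotoneOn (fun s => (K + s) ^ e * s) (Ici 0) := fun s hs t ht hst => by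
    simpa only [shiftedPow_of_nonneg hs, shiftedPow_of_nonneg ht] using
      (strictMono_shiftedPow hK he).monotone hst
  have hint := intervalIntegrable_add_rpow_mul hK he le_rfl hr
  have hup : (∫ s in (0 : ℝ)..r, (K + s) ^ e * s) ≤ (K + r) ^ e * r ^ 2 := by
    calc (∫ s in (0 : ℝ)..r, (K + s) ^ e * s) ≤ ∫ _ in (0 : ℝ)..r, (K + r) ^ e * r :=
          intervalIntegral.integral_mono_on hr hint intervalIntegrable_const
            fun s hs => hmono hs.1 hr hs.2
      _ = (K + r) ^ e * r ^ 2 := by rw [intervalIntegral.integral_const, smul_eq_mul]; ring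
  have hhalf : r / 2 * ((K + r / 2) ^ e * (r / 2)) ≤ ∫ s in (0 : ℝ)..r, (K + s) ^ e * s := by
    calc r / 2 * ((K + r / 2) ^ e * (r / 2)) = ∫ _ in r / 2..r, (K + r / 2) ^ e * (r / 2) := by
          rw [intervalIntegral.integral_const, smul_eq_mul]; ring
      _ ≤ ∫ s in r / 2..r, (K + s) ^ e * s :=
          intervalIntegral.integral_mono_on (by linarith) intervalIntegrable_const
            (intervalIntegrable_add_rpow_mul hK he (by positivity) hr)
            fun s hs => hmono (mem_Ici.2 (by positivity)) (mem_Ici.2 (by linarith [hs.1])) hs.1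
      _ ≤ ∫ s in (0 : ℝ)..r, (K + s) ^ e * s := by
          refine intervalIntegral.integral_mono_interval (by positivity) (by linarith) le_rfl ?_
            hint
          filter_upwards [ae_restrict_mem measurableSet_Ioc] with s hs
          exact mul_nonneg (Real.rpow_nonneg (by linarith [hs.1]) e) hs.1.le
  have hshift : (K + r) ^ e ≤ 2 ^ |e| * (K + r / 2) ^ e :=
    Comparable.rpow_le ⟨by linarith, by linarith⟩ one_le_two le_rfl (by positivity)
      (by positivity)
  have hc : 1 ≤ 4 * (2 : ℝ) ^ |e| := by
    linarith [Real.one_le_rpow (one_le_two : (1 : ℝ) ≤ 2) (abs_nonneg e)]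
  constructor
  · calc (K + r) ^ e * r ^ 2 ≤ 2 ^ |e| * (K + r / 2) ^ e * r ^ 2 := by gcongr
      _ = 4 * 2 ^ |e| * (r / 2 * ((K + r / 2) ^ e * (r / 2))) := by ring
      _ ≤ _ := by gcongr
  · exact hup.trans (le_mul_of_one_le_left (by positivity) hc)

end Estimates

theorem Monotone.mul_sub_le_integral_sub {f : ℝ → ℝ} (hf : Monotone f) (hc : Continuous f)
    (u s : ℝ) : f u * (s - u) ≤ (∫ y in (0 : ℝ)..s, f y) - ∫ y in (0 : ℝ)..u, f y := by
  have hderiv : ∀ x, HasDerivAt (fun s => ∫ y in (0 : ℝ)..s, f y) (f x) x := fun x =>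
    (hc.integral_hasStrictDerivAt 0 x).hasDerivAt
  have hconv : ConvexOn ℝ univ fun s => ∫ y in (0 : ℝ)..s, f y := by
    refine Monotone.convexOn_univ_of_deriv (fun x => (hderiv x).differentiableAt) ?_
    rwa [funext fun x => (hderiv x).deriv]
  rcases lt_trichotomy u s with h | rfl | h
  · have := hconv.le_slope_of_hasDerivAt trivial trivial h (hderiv u)
    rwa [slope_def_field, le_div_iff₀ (sub_pos.2 h)] at this
  · simp
  · have := hconv.slope_le_of_hasDerivAt trivial trivial h (hderiv u)
    rw [slope_def_field, div_le_iff₀ (sub_pos.2 h)] at this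
    linarith

section Legendre

variable (f : ℝ ≃o ℝ)

/-- The Legendre transform of `x ↦ ∫₀ˣ f`, evaluated where its supremum is attained. -/
noncomputable def legendrePrimitive (t : ℝ) : ℝ := t * f.symm t - ∫ x in (0 : ℝ)..f.symm t, f x

theorem mul_sub_primitive_le_legendrePrimitive (s t : ℝ) :
    t * s - ∫ y in (0 : ℝ)..s, f y ≤ legendrePrimitive f t := by
  have := f.monotone.mul_sub_le_integral_sub f.continuous (f.symm t) s
  rw [f.apply_symm_apply] at this
  rw [legendrePrimitive]
  linarith

/-- The supporting lines of `legendrePrimitive f` at `t` and `t'` have slopes `f.symm t` and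
`f.symm t'`, which squeezes the difference quotient. -/
theorem hasDerivAt_legendrePrimitive (t : ℝ) :
    HasDerivAt (legendrePrimitive f) (f.symm t) t := by
  have hbound : ∀ t', ‖legendrePrimitive f t' - legendrePrimitive f t - (t' - t) • f.symm t‖ ≤
      1 * ‖(f.symm t' - f.symm t) * (t' - t)‖ := fun t' => by
    have h₁ := mul_sub_primitive_le_legendrePrimitive f (f.symm t) t'
    have h₂ := mul_sub_primitive_le_legendrePrimitive f (f.symm t') t
    unfold legendrePrimitive at h₁ h₂ ⊢
    rw [one_mul, smul_eq_mul, Real.norm_eq_abs, Real.norm_eq_abs,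
      abs_of_nonneg (by linarith)]
    exact le_trans (by linarith) (le_abs_self _)
  have hsmall : (fun t' => (f.symm t' - f.symm t) * (t' - t)) =o[𝓝 t] fun t' => t' - t := by
    have hg : (fun t' => f.symm t' - f.symm t) =o[𝓝 t] fun _ => (1 : ℝ) :=
      (Asymptotics.isLittleO_one_iff ℝ).2
        (tendsto_sub_nhds_zero_iff.2 (f.symm.continuous.tendsto t))
    simpa using hg.mul_isBigO (Asymptotics.isBigO_refl (fun t' => t' - t) _)
  exact hasDerivAt_iff_isLittleO.2
    ((Asymptotics.IsBigO.of_bound 1 (Eventually.of_forall hbound)).trans_isLittleO hsmall)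

end Legendre

section Conjugate

variable {δ p : ℝ}

/-- `φ_p'`, extended oddly to `ℝ`; its inverse is `((φ_p)*)'`. -/
noncomputable def phiDerivOrderIso (hδ : 0 ≤ δ) (hp : 1 < p) : ℝ ≃o ℝ :=
  shiftedPowOrderIso hδ (σ := p - 2) (by linarith)

theorem phi_eq_integral_shiftedPow {r : ℝ} (hr : 0 ≤ r) :
    phi δ p r = ∫ s in (0 : ℝ)..r, shiftedPow δ (p - 2) s :=
  intervalIntegral.integral_congr fun s hs =>
    (shiftedPow_of_nonneg (by rw [uIcc_of_le hr] at hs; exact hs.1)).symm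

theorem phiDerivOrderIso_symm_nonneg (hδ : 0 ≤ δ) (hp : 1 < p) {t : ℝ} (ht : 0 ≤ t) :
    0 ≤ (phiDerivOrderIso hδ hp).symm t :=
  shiftedPowOrderIso_symm_nonneg hδ _ ht

theorem fconj_phi (hδ : 0 ≤ δ) (hp : 1 < p) {t : ℝ} (ht : 0 ≤ t) :
    fconj (phi δ p) t = legendrePrimitive (phiDerivOrderIso hδ hp) t := by
  set f := phiDerivOrderIso hδ hp
  have hyoung : ∀ s : NNReal, t * s - phi δ p s ≤ legendrePrimitive f t := fun s => by
    rw [phi_eq_integral_shiftedPow s.coe_nonneg]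
    exact mul_sub_primitive_le_legendrePrimitive f s t
  refine le_antisymm (ciSup_le hyoung) ?_
  have hu := phiDerivOrderIso_symm_nonneg hδ hp ht
  refine le_trans (le_of_eq ?_) (le_ciSup ⟨_, forall_mem_range.2 hyoung⟩ (f.symm t).toNNReal)
  rw [Real.coe_toNNReal _ hu, phi_eq_integral_shiftedPow hu]
  rfl

theorem deriv_fconj_phi (hδ : 0 ≤ δ) (hp : 1 < p) {t : ℝ} (ht : 0 < t) :
    deriv (fconj (phi δ p)) t = (phiDerivOrderIso hδ hp).symm t := by
  refine ((hasDerivAt_legendrePrimitive _ t).congr_of_eventuallyEq ?_).deriv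
  filter_upwards [lt_mem_nhds ht] with s hs
  exact fconj_phi hδ hp hs.le

theorem comparable_rpow_sub_one (hδ : 0 ≤ δ) (hp : 1 < p) {u : ℝ} (hu : 0 ≤ u) :
    Comparable (2 ^ p) (δ ^ (p - 1) + (δ + u) ^ (p - 2) * u) ((δ + u) ^ (p - 1)) := by
  have hδu : 0 ≤ δ + u := by linarith
  have hB : (δ + u) ^ (p - 1) = (δ + u) ^ (p - 2) * (δ + u) := by
    rw [← Real.rpow_add_one' hδu (by linarith)]; ring_nf
  have h2p : (2 : ℝ) ≤ 2 ^ p := by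
    simpa using Real.rpow_le_rpow_of_exponent_le one_le_two hp.le
  have hpow : 0 ≤ (δ + u) ^ (p - 2) := Real.rpow_nonneg hδu _
  have hδp : 0 ≤ δ ^ (p - 1) := Real.rpow_nonneg hδ _
  have hδB : δ ^ (p - 1) ≤ (δ + u) ^ (p - 1) := Real.rpow_le_rpow hδ (by linarith) (by linarith)
  have htB : (δ + u) ^ (p - 2) * u ≤ (δ + u) ^ (p - 1) := by
    rw [hB]; exact mul_le_mul_of_nonneg_left (by linarith) hpow
  constructor
  · nlinarith
  · rcases le_total u δ with huδ | hδu'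
    · have h2δ : (δ + u) ^ (p - 1) ≤ 2 ^ p * δ ^ (p - 1) := by
        calc (δ + u) ^ (p - 1) ≤ (2 * δ) ^ (p - 1) :=
              Real.rpow_le_rpow hδu (by linarith) (by linarith)
          _ = 2 ^ (p - 1) * δ ^ (p - 1) := Real.mul_rpow zero_le_two hδ
          _ ≤ 2 ^ p * δ ^ (p - 1) := by
              gcongr
              · exact one_le_two
              · linarith
      nlinarith [mul_nonneg hpow hu]
    · have h2t : (δ + u) ^ (p - 1) ≤ 2 * ((δ + u) ^ (p - 2) * u) := by
        rw [hB]; nlinarith [mul_le_mul_of_nonneg_left (by linarith : δ + u ≤ 2 * u) hpow]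
      nlinarith [mul_nonneg hpow hu]

/-- With `u = (φ_p')⁻¹ t`, i.e. `t = (δ + u) ^ (p - 2) u`, one has
`u = ((δ + u) ^ (p - 1)) ^ (p' - 2) t`, and `(δ + u) ^ (p - 1) ≂ δ ^ (p - 1) + t` by
`comparable_rpow_sub_one`. -/
theorem comparable_phiDerivOrderIso_symm (hδ : 0 ≤ δ) (hp : 1 < p) {t : ℝ} (ht : 0 ≤ t) :
    Comparable ((2 ^ p) ^ |p / (p - 1) - 2|) ((δ ^ (p - 1) + t) ^ (p / (p - 1) - 2) * t)
      ((phiDerivOrderIso hδ hp).symm t) := by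
  set u := (phiDerivOrderIso hδ hp).symm t
  have hu : 0 ≤ u := phiDerivOrderIso_symm_nonneg hδ hp ht
  have htu : t = (δ + u) ^ (p - 2) * u := by
    rw [← shiftedPow_of_nonneg hu]
    exact ((phiDerivOrderIso hδ hp).apply_symm_apply t).symm
  have hinv : ((δ + u) ^ (p - 1)) ^ (p / (p - 1) - 2) * t = u := by
    rcases hu.eq_or_lt with hu0 | hu0
    · rw [htu, ← hu0]; simp
    rw [← Real.rpow_mul (by linarith), htu, ← mul_assoc, ← Real.rpow_add (by linarith)]
    have : (p - 1) * (p / (p - 1) - 2) + (p - 2) = 0 := by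
      field_simp [(by linarith : p - 1 ≠ 0)]; ring
    rw [this, Real.rpow_zero, one_mul]
  have hcomp := comparable_rpow_sub_one hδ hp hu
  rw [← htu] at hcomp
  have := (hcomp.rpow (τ := p / (p - 1) - 2) (Real.one_le_rpow one_le_two (by linarith)) le_rfl
    (by positivity) (Real.rpow_nonneg (by linarith) _)).mul_right ht
  rwa [hinv] at this

theorem conjShift_eq_integral (hδ : 0 ≤ δ) (hp : 1 < p) {a r : ℝ} (ha : 0 ≤ a)
    (hr : 0 ≤ r) :
    conjShift δ p a r =
      ∫ s in (0 : ℝ)..r, (phiDerivOrderIso hδ hp).symm (a + s) * (s / (a + s)) := by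
  refine intervalIntegral.integral_congr fun s hs => ?_
  rw [uIcc_of_le hr] at hs
  rcases (add_nonneg ha hs.1).eq_or_lt with h | h
  · simp [← h]
  · exact congrArg (· * (s / (a + s))) (deriv_fconj_phi hδ hp h)

theorem intervalIntegrable_phiDerivOrderIso_symm_mul (hδ : 0 ≤ δ) (hp : 1 < p) {a : ℝ}
    (ha : 0 ≤ a) {r : ℝ} (hr : 0 ≤ r) :
    IntervalIntegrable (fun s => (phiDerivOrderIso hδ hp).symm (a + s) * (s / (a + s)))
      volume 0 r := by
  set g := (phiDerivOrderIso hδ hp).symm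
  rcases ha.eq_or_lt with rfl | ha0
  · have : (fun s => g (0 + s) * (s / (0 + s))) = g := funext fun s => by
      rcases eq_or_ne s 0 with rfl | hs
      · simp [g, phiDerivOrderIso, shiftedPowOrderIso_symm_zero]
      · rw [zero_add, div_self hs, mul_one]
    rw [this]
    exact g.continuous.intervalIntegrable 0 r
  · refine ContinuousOn.intervalIntegrable
      ((g.continuous.comp (continuous_const_add a)).continuousOn.mul
        (continuousOn_id.div (continuous_const_add a).continuousOn fun s hs => ?_))
    rw [uIcc_of_le hr] at hs
    exact (add_pos_of_pos_of_nonneg ha0 hs.1).ne'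

end Conjugate

theorem one_lt_div_sub_one {p : ℝ} (hp : 1 < p) : 1 < p / (p - 1) := by
  rw [lt_div_iff₀ (by linarith)]; linarith

theorem abs_div_sub_one_sub_two_le {pm p : ℝ} (hpm : 1 < pm) (hp : pm ≤ p) :
    |p / (p - 1) - 2| ≤ pm / (pm - 1) := by
  have h1 := one_lt_div_sub_one (hpm.trans_le hp)
  have h2 : p / (p - 1) ≤ pm / (pm - 1) := by
    rw [div_le_div_iff₀ (by linarith) (by linarith)]; nlinarith
  rw [abs_le]; constructor <;> linarith [one_lt_div_sub_one hpm]

theorem comparable_conjShift {δ pm pp p : ℝ} (hδ : 0 ≤ δ) (hpm : 1 < pm) (hp₁ : pm ≤ p)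
    (hp₂ : p ≤ pp) {a r : ℝ} (ha : 0 ≤ a) (hr : 0 ≤ r) :
    Comparable (4 * 2 ^ (pm / (pm - 1)) * (2 ^ pp) ^ (pm / (pm - 1)))
      ((δ ^ (p - 1) + a + r) ^ (p / (p - 1) - 2) * r ^ 2) (conjShift δ p a r) := by
  have hp : 1 < p := hpm.trans_le hp₁
  set e := p / (p - 1) - 2
  have he : -1 < e := by linarith [one_lt_div_sub_one hp]
  have hpoint : ∀ s ∈ Icc 0 r, Comparable ((2 ^ p) ^ |e|) ((δ ^ (p - 1) + a + s) ^ e * s)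
      ((phiDerivOrderIso hδ hp).symm (a + s) * (s / (a + s))) := by
    intro s hs
    rcases (add_nonneg ha hs.1).eq_or_lt with h | h
    · obtain rfl : s = 0 := by linarith [hs.1]
      simp [Comparable]
    have := (comparable_phiDerivOrderIso_symm hδ hp h.le).mul_right (div_nonneg hs.1 h.le)
    rwa [mul_assoc, mul_div_cancel₀ _ h.ne', ← add_assoc] at this
  have hK : 0 ≤ δ ^ (p - 1) + a := add_nonneg (Real.rpow_nonneg hδ _) ha
  have h := (comparable_integral_add_rpow_mul hK he hr).trans (by positivity) (by positivity)
    (Comparable.intervalIntegral hr (intervalIntegrable_add_rpow_mul hK he le_rfl hr)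
      (intervalIntegrable_phiDerivOrderIso_symm_mul hδ hp ha hr) hpoint)
  rw [← conjShift_eq_integral hδ hp ha hr] at h
  have hq := abs_div_sub_one_sub_two_le hpm hp₁
  refine h.mono (by positivity) ?_ (by positivity)
  gcongr
  · exact one_le_two
  · calc (2 ^ p) ^ |e| ≤ (2 ^ p) ^ (pm / (pm - 1)) :=
          Real.rpow_le_rpow_of_exponent_le (Real.one_le_rpow one_le_two (by linarith)) hq
      _ ≤ (2 ^ pp) ^ (pm / (pm - 1)) := by
          gcongr
          exact one_le_two

/-- The entries of a matrix as a Euclidean vector, which puts an inner product behind `frob`. -/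
noncomputable def frobVec {d : ℕ} (M : Matrix (Fin d) (Fin d) ℝ) :
    EuclideanSpace ℝ (Fin d × Fin d) :=
  WithLp.toLp 2 fun ij => M ij.1 ij.2

theorem frob_eq_norm_frobVec {d : ℕ} (M : Matrix (Fin d) (Fin d) ℝ) :
    frob M = ‖frobVec M‖ := by
  rw [frob, EuclideanSpace.norm_eq, Fintype.sum_prod_type]
  simp [frobVec]

theorem frob_nonneg {d : ℕ} (M : Matrix (Fin d) (Fin d) ℝ) : 0 ≤ frob M := Real.sqrt_nonneg _

theorem frobVec_sub {d : ℕ} (M N : Matrix (Fin d) (Fin d) ℝ) :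
    frobVec (M - N) = frobVec M - frobVec N := rfl

theorem frobVec_smul {d : ℕ} (c : ℝ) (M : Matrix (Fin d) (Fin d) ℝ) :
    frobVec (c • M) = c • frobVec M := rfl

theorem comparable_frob_Fstar_sub {d : ℕ} {δ pm p : ℝ} (hδ : 0 ≤ δ) (hpm : 1 < pm) (hp : pm ≤ p)
    (A B : Matrix (Fin d) (Fin d) ℝ) :
    Comparable (3 ^ (pm / (pm - 1)) * (4 * (pm / (pm - 1) + 2) ^ 2))
      ((δ ^ (p - 1) + frob (msym A) + frob (msym A - msym B)) ^ (p / (p - 1) - 2) *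
        frob (msym A - msym B) ^ 2)
      (frob (Fstar δ p A - Fstar δ p B) ^ 2) := by
  have he := abs_div_sub_one_sub_two_le hpm hp
  have h1 := one_lt_div_sub_one (hpm.trans_le hp)
  have hσ : -1 < (p / (p - 1) - 2) / 2 := by linarith
  have hv := comparable_norm_rpow_smul_sub (Real.rpow_nonneg hδ (p - 1)) hσ
    (frobVec (msym A)) (frobVec (msym B))
  rw [show 2 * ((p / (p - 1) - 2) / 2) = p / (p - 1) - 2 by ring] at hv
  simp only [Fstar, frobVec_sub, frobVec_smul, frob_eq_norm_frobVec]
  have hc := one_le_max_inv (show 0 < 1 + (p / (p - 1) - 2) / 2 by linarith)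
  refine hv.mono (by positivity) ?_ (by positivity)
  gcongr
  · norm_num
  · have he' := le_of_abs_le he
    refine max_le (by linarith) ?_
    rw [inv_le_iff_one_le_mul₀ (by linarith)]
    nlinarith [(abs_nonneg _).trans he]

theorem stmt7_general (d : ℕ) (δ pm pp : ℝ) (hδ : 0 ≤ δ) (hpm : 1 < pm)
    (hpmpp : pm ≤ pp) :
    ∃ c : ℝ, 1 ≤ c ∧ ∀ p : ℝ, pm ≤ p → p ≤ pp → ∀ A B : Matrix (Fin d) (Fin d) ℝ,
      c⁻¹ * conjShift δ p (frob (msym A)) (frob (msym A - msym B)) ≤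
          frob (Fstar δ p A - Fstar δ p B) ^ 2 ∧
      frob (Fstar δ p A - Fstar δ p B) ^ 2 ≤
          c * conjShift δ p (frob (msym A)) (frob (msym A - msym B)) := by
  set q := pm / (pm - 1)
  have hq : 1 ≤ q := (one_lt_div_sub_one hpm).le
  have h2pp : (1 : ℝ) ≤ 2 ^ pp := Real.one_le_rpow one_le_two (by linarith)
  have hc₁ : (1 : ℝ) ≤ 4 * 2 ^ q * (2 ^ pp) ^ q := by
    have := Real.one_le_rpow (one_le_two : (1 : ℝ) ≤ 2) (by linarith : 0 ≤ q)
    have := Real.one_le_rpow h2pp (by linarith : 0 ≤ q)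
    nlinarith
  have hc₂ : (1 : ℝ) ≤ 3 ^ q * (4 * (q + 2) ^ 2) := by
    have := Real.one_le_rpow (by norm_num : (1 : ℝ) ≤ 3) (by linarith : 0 ≤ q)
    nlinarith
  refine ⟨_, one_le_mul_of_one_le_of_one_le hc₁ hc₂, fun p hp₁ hp₂ A B => ?_⟩
  have hconj := comparable_conjShift hδ hpm hp₁ hp₂ (frob_nonneg (msym A))
    (frob_nonneg (msym A - msym B))
  have h := hconj.symm.trans (by positivity) (by positivity)
    (comparable_frob_Fstar_sub hδ hpm hp₁ A B)
  exact ⟨h.inv_mul_le (by positivity), h.2⟩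

theorem stmt7 (d : ℕ) (hd : 1 ≤ d) (δ pm pp : ℝ) (hδ : 0 ≤ δ) (hpm : 1 < pm)
    (hpmpp : pm ≤ pp) :
    ∃ c : ℝ, 1 ≤ c ∧ ∀ p : ℝ, pm ≤ p → p ≤ pp → ∀ A B : Matrix (Fin d) (Fin d) ℝ,
      c⁻¹ * conjShift δ p (frob (msym A)) (frob (msym A - msym B)) ≤
          frob (Fstar δ p A - Fstar δ p B) ^ 2 ∧
      frob (Fstar δ p A - Fstar δ p B) ^ 2 ≤
          c * conjShift δ p (frob (msym A)) (frob (msym A - msym B)) :=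
  stmt7_general d δ pm pp hδ hpm hpmpp
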